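/- arXiv:1804.10471 — 2 statements merged into one kernel-verified Lean document; each statement's English description precedes it below -/
import Mathlib

section
/- Let Γ be a countable group acting by measure-preserving transformations on a standard probability space (Ω, μ), and assume the fixed-point set Fix(g) = {ω ∈ Ω : g·ω = ω} is measurable for each g ∈ Γ. Then the function τ : Γ → ℝ defined by τ(g) = μ(Fix(g)) is a character: it is a normalized positive definite function on Γ and satisfies τ(h⁻¹ g h) = τ(g) for all g, h ∈ Γ. -/
open MeasureTheory
open scoped ComplexOrder

/-- A function `φ : Γ → ℂ` is positive definite if for every `n` and every tuple
`g : Fin n → Γ`, the matrix `[φ((g j)⁻¹ * g i)]` is positive semidefinite. -/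
def IsPositiveDefinite {Γ : Type*} [Group Γ] (φ : Γ → ℂ) : Prop :=
  ∀ (n : ℕ) (g : Fin n → Γ), (Matrix.of fun i j : Fin n => φ ((g j)⁻¹ * g i)).PosSemidef

/-- A normalized positive definite function. -/
def IsNormalizedPositiveDefinite {Γ : Type*} [Group Γ] (φ : Γ → ℂ) : Prop :=
  IsPositiveDefinite φ ∧ φ 1 = 1

/-!
For fixed `ω`, the matrix `[g i • ω = g j • ω]` is the Gram matrix of the point masses at the
points `g i • ω`, hence positive semidefinite. Integrating it over `ω` gives the matrix
`[μ (Fix ((g j)⁻¹ * g i))]`, and integrals of positive semidefinite matrices are positive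
semidefinite. Conjugation invariance holds because `Fix (h⁻¹ * g * h)` is the preimage of
`Fix g` under the measure-preserving map `h • ·`.
-/

open scoped Matrix

theorem Matrix.posSemidef_of_ite_eq {n α R : Type*} [Fintype n] [DecidableEq α]
    [CommRing R] [PartialOrder R] [StarRing R] [StarOrderedRing R] (v : n → α) :
    (Matrix.of fun i j => if v i = v j then (1 : R) else 0).PosSemidef := by
  let B : Matrix n (Set.range v) R := Matrix.of fun i a => if v i = a then 1 else 0
  have hB : (Matrix.of fun i j => if v i = v j then (1 : R) else 0) = B * Bᴴ := by
    ext i j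
    rw [mul_apply, Fintype.sum_eq_single ⟨v i, i, rfl⟩ fun a ha => ?_]
    · simp [B, eq_comm, apply_ite (star : R → R)]
    · have : v i ≠ a := fun h => ha (Subtype.ext h.symm)
      simp [B, this]
  rw [hB]
  exact posSemidef_self_mul_conjTranspose B

theorem Matrix.PosSemidef.integral {n Ω : Type*} [Fintype n] [MeasurableSpace Ω] {μ : Measure Ω}
    {M : Ω → Matrix n n ℂ} (hint : ∀ i j, Integrable (fun ω => M ω i j) μ)
    (hM : ∀ᵐ ω ∂μ, (M ω).PosSemidef) :
    (Matrix.of fun i j => ∫ ω, M ω i j ∂μ).PosSemidef := by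
  refine .of_dotProduct_mulVec_nonneg ?_ fun x => ?_
  · ext i j
    simp only [conjTranspose_apply, of_apply, Complex.star_def, ← integral_conj]
    refine integral_congr_ae ?_
    filter_upwards [hM] with ω hω
    exact congrFun (congrFun hω.1 i) j
  · have hquad : star x ⬝ᵥ (Matrix.of (fun i j => ∫ ω, M ω i j ∂μ) *ᵥ x)
        = ∫ ω, star x ⬝ᵥ (M ω *ᵥ x) ∂μ := by
      simp only [dotProduct, mulVec, of_apply, Finset.mul_sum]
      rw [integral_finsetSum _ fun i _ => integrable_finsetSum _ fun j _ =>
        ((hint i j).mul_const _).const_mul _]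
      refine Finset.sum_congr rfl fun i _ => ?_
      rw [integral_finsetSum _ fun j _ => ((hint i j).mul_const _).const_mul _]
      simp only [integral_const_mul, integral_mul_const]
    rw [hquad]
    exact integral_nonneg_of_ae (hM.mono fun ω hω => hω.dotProduct_mulVec_nonneg x)

theorem MulAction.fixedBy_inv_mul {G α : Type*} [Group G] [MulAction G α] (g h : G) :
    fixedBy α (h⁻¹ * g) = {x | g • x = h • x} := by
  ext x
  simp [mul_smul, inv_smul_eq_iff]

theorem MulAction.fixedBy_conj_eq_preimage {G α : Type*} [Group G] [MulAction G α] (g h : G) :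
    fixedBy α (h⁻¹ * g * h) = (h • ·) ⁻¹' fixedBy α g := by
  rw [Set.preimage_smul, smul_fixedBy, inv_inv]

theorem measure_fixedBy_conj {G Ω : Type*} [Group G] [MulAction G Ω] [MeasurableSpace Ω]
    {μ : Measure Ω} {g h : G} (hh : MeasurePreserving (h • ·) μ μ)
    (hg : MeasurableSet (MulAction.fixedBy Ω g)) :
    μ (MulAction.fixedBy Ω (h⁻¹ * g * h)) = μ (MulAction.fixedBy Ω g) := by
  rw [MulAction.fixedBy_conj_eq_preimage, hh.measure_preimage hg.nullMeasurableSet]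

theorem integral_ite_one_zero_eq_measureReal {Ω : Type*} [MeasurableSpace Ω] {μ : Measure Ω}
    {p : Ω → Prop} [DecidablePred p] (hp : MeasurableSet {ω | p ω}) :
    ∫ ω, (if p ω then (1 : ℂ) else 0) ∂μ = μ.real {ω | p ω} := by
  simpa [Set.indicator_apply] using integral_indicator_const (μ := μ) (1 : ℂ) hp

theorem isPositiveDefinite_measureReal_fixedBy {Γ Ω : Type*} [Group Γ] [MulAction Γ Ω]
    [MeasurableSpace Ω] (μ : Measure Ω) [IsFiniteMeasure μ]
    (hfix : ∀ g : Γ, MeasurableSet (MulAction.fixedBy Ω g)) :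
    IsPositiveDefinite fun g : Γ => (μ.real (MulAction.fixedBy Ω g) : ℂ) := by
  classical
  intro n g
  have hmeas : ∀ i j, MeasurableSet {ω : Ω | g i • ω = g j • ω} := fun i j => by
    simpa only [MulAction.fixedBy_inv_mul] using hfix ((g j)⁻¹ * g i)
  have hentries : (Matrix.of fun i j => (μ.real (MulAction.fixedBy Ω ((g j)⁻¹ * g i)) : ℂ))
      = Matrix.of fun i j => ∫ ω, (if g i • ω = g j • ω then (1 : ℂ) else 0) ∂μ := by
    ext i j
    rw [Matrix.of_apply, Matrix.of_apply, MulAction.fixedBy_inv_mul,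
      integral_ite_one_zero_eq_measureReal (hmeas i j)]
  rw [hentries]
  refine Matrix.PosSemidef.integral (fun i j => ?_)
    (ae_of_all _ fun ω => Matrix.posSemidef_of_ite_eq fun i => g i • ω)
  exact (integrable_const (1 : ℂ)).indicator (hmeas i j) |>.congr (ae_of_all _ fun ω => by
    simp [Set.indicator_apply])

theorem measure_of_fixed_points_is_character_general
    {Γ Ω : Type*} [Group Γ]
    [MeasurableSpace Ω]
    (μ : Measure Ω) [IsProbabilityMeasure μ]
    [MulAction Γ Ω]
    (hmp : ∀ g : Γ, MeasurePreserving (fun ω => g • ω) μ μ)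
    (hfix : ∀ g : Γ, MeasurableSet {ω : Ω | g • ω = ω}) :
    IsNormalizedPositiveDefinite
        (fun g : Γ => ((μ {ω : Ω | g • ω = ω}).toReal : ℂ)) ∧
      ∀ g h : Γ, (μ {ω : Ω | (h⁻¹ * g * h) • ω = ω}).toReal
        = (μ {ω : Ω | g • ω = ω}).toReal := by
  exact ⟨⟨isPositiveDefinite_measureReal_fixedBy μ hfix, by simp⟩,
    fun g h => congrArg ENNReal.toReal (measure_fixedBy_conj (hmp h) (hfix g))⟩

/-- The expectation of the invariant random subgroup of stabilizers of a p.m.p. action is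
a character: `τ(g) = μ(Fix(g))` is a normalized positive definite function invariant
under conjugation. -/
theorem measure_of_fixed_points_is_character
    {Γ Ω : Type*} [Group Γ] [Countable Γ]
    [MeasurableSpace Ω] [StandardBorelSpace Ω]
    (μ : Measure Ω) [IsProbabilityMeasure μ]
    [MulAction Γ Ω]
    (hmp : ∀ g : Γ, MeasurePreserving (fun ω => g • ω) μ μ)
    (hfix : ∀ g : Γ, MeasurableSet {ω : Ω | g • ω = ω}) :
    IsNormalizedPositiveDefinite
        (fun g : Γ => ((μ {ω : Ω | g • ω = ω}).toReal : ℂ)) ∧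
      ∀ g h : Γ, (μ {ω : Ω | (h⁻¹ * g * h) • ω = ω}).toReal
        = (μ {ω : Ω | g • ω = ω}).toReal :=
  measure_of_fixed_points_is_character_general μ hmp hfix
end

section
/- Let Γ be a countable group acting by measure-preserving transformations on a standard probability space (Ω, μ), let φ be an invariant random positive definite function on Γ over this action, and let τ(γ) = ∫_Ω φ(ω)(γ) dμ(ω). Suppose |τ(γ)| = 1 for every γ ∈ Γ. Then for almost every ω ∈ Ω and every γ ∈ Γ one has φ(ω)(γ) = τ(γ); that is, any i.r.p.d.f. integrating to a character taking values only on the boundary of the unit disk is constant. (In particular, the trivial character and, on S_∞, the alternating character are disintegration rigid.) -/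
/-!
A normalized positive definite function takes its values in the closed unit disk, since its
`2 × 2` Gram matrices at `(1, γ)` have nonnegative determinant. The closed disk is strictly
convex, so for each `γ` the average of `φ ω γ` can lie on the unit circle only if `φ ω γ` is
almost surely equal to that average; countability of `Γ` lets us intersect these full-measure
sets.
-/

open MeasureTheory
open scoped ComplexOrder

section PositiveDefinite

variable {Γ : Type*} [Group Γ] {φ : Γ → ℂ}

lemma IsPositiveDefinite.map_inv (hφ : IsPositiveDefinite φ) (γ : Γ) : φ γ⁻¹ = star (φ γ) := by
  simpa using ((hφ 2 ![1, γ]).isHermitian.apply 0 1).symm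

lemma IsNormalizedPositiveDefinite.norm_le_one (hφ : IsNormalizedPositiveDefinite φ) (γ : Γ) :
    ‖φ γ‖ ≤ 1 := by
  have hdet := (hφ.1 2 ![1, γ]).det_nonneg
  simp only [Matrix.det_fin_two, Matrix.of_apply, Matrix.cons_val_zero, Matrix.cons_val_one,
    Matrix.cons_val_fin_one, inv_one, mul_one, one_mul, inv_mul_cancel, hφ.2, hφ.1.map_inv,
    RCLike.star_def, Complex.conj_mul', sub_nonneg] at hdet
  have hsq : ‖φ γ‖ ^ 2 ≤ 1 := by exact_mod_cast hdet
  exact (pow_le_one_iff_of_nonneg (norm_nonneg _) two_ne_zero).1 hsq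

end PositiveDefinite

lemma ae_eq_integral_of_norm_le_of_norm_integral_eq {α E : Type*} [MeasurableSpace α]
    {μ : Measure α} [IsProbabilityMeasure μ] [NormedAddCommGroup E] [NormedSpace ℝ E]
    [CompleteSpace E] [StrictConvexSpace ℝ E] {f : α → E} {C : ℝ} (h_le : ∀ᵐ x ∂μ, ‖f x‖ ≤ C)
    (h_eq : ‖∫ x, f x ∂μ‖ = C) :
    ∀ᵐ x ∂μ, f x = ∫ x, f x ∂μ := by
  have h := (ae_eq_const_or_norm_integral_lt_of_norm_le_const h_le).resolve_right (by simp [h_eq])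
  rwa [average_eq_integral] at h

theorem irpdf_integrating_to_unimodular_character_is_constant_general
    {Γ Ω : Type*} [Group Γ] [Countable Γ]
    [MeasurableSpace Ω]
    (μ : Measure Ω) [IsProbabilityMeasure μ]
    (φ : Ω → Γ → ℂ)
    (hpd : ∀ᵐ ω ∂μ, IsNormalizedPositiveDefinite (φ ω))
    (hmod : ∀ γ : Γ, ‖∫ ω, φ ω γ ∂μ‖ = 1) :
    ∀ᵐ ω ∂μ, ∀ γ : Γ, φ ω γ = ∫ ω', φ ω' γ ∂μ := by
  refine ae_all_iff.2 fun γ => ae_eq_integral_of_norm_le_of_norm_integral_eq ?_ (hmod γ)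
  filter_upwards [hpd] with ω hω
  exact hω.norm_le_one γ

/-- An invariant random positive definite function integrating to a character taking
values only on the boundary of the unit disk is almost surely constant, equal to that
character. -/
theorem irpdf_integrating_to_unimodular_character_is_constant
    {Γ Ω : Type*} [Group Γ] [Countable Γ]
    [MeasurableSpace Ω] [StandardBorelSpace Ω]
    (μ : Measure Ω) [IsProbabilityMeasure μ]
    [MulAction Γ Ω]
    (hmp : ∀ g : Γ, MeasurePreserving (fun ω => g • ω) μ μ)
    (φ : Ω → Γ → ℂ)
    (hmeas : ∀ γ : Γ, Measurable fun ω => φ ω γ)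
    (hpd : ∀ᵐ ω ∂μ, IsNormalizedPositiveDefinite (φ ω))
    (hinv : ∀ g h : Γ, ∀ᵐ ω ∂μ, φ (g • ω) h = φ ω (g⁻¹ * h * g))
    (hmod : ∀ γ : Γ, ‖∫ ω, φ ω γ ∂μ‖ = 1) :
    ∀ᵐ ω ∂μ, ∀ γ : Γ, φ ω γ = ∫ ω', φ ω' γ ∂μ :=
  irpdf_integrating_to_unimodular_character_is_constant_general μ φ hpd hmod
end
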